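/- (No strategy-scoring pair beats mutual information) Let X, Y be finite sets, P a joint distribution on X×Y with full-support marginals P_X, P_Y, and Φ:[0,∞)→ℝ continuous convex with Φ(1)=0. For any functions (strategies) θ_A : X→Δ(X), θ_B : Y→Δ(Y), and any scoring function K : X×Y→ℝ taking values in dom(Φ*), the ex-ante payment u_A = Σ_{x,y}P(x,y) Σ_{x̂,ŷ} θ_A(x,x̂)θ_B(y,ŷ)K(x̂,ŷ) − Σ_{x,y}P_X(x)P_Y(y) Σ_{x̂,ŷ} θ_A(x,x̂)θ_B(y,ŷ)Φ*(K(x̂,ŷ)) satisfies u_A ≤ D_Φ(P ‖ P_X⊗P_Y). -/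

import Mathlib

open scoped BigOperators

/-- The set whose supremum defines the convex conjugate of `Φ` (with domain `[0,∞)`). -/
def conjSet (Φ : ℝ → ℝ) (b : ℝ) : Set ℝ := {y | ∃ a : ℝ, 0 ≤ a ∧ y = a * b - Φ a}

/-- Convex conjugate `Φ*` of `Φ : [0,∞) → ℝ`. -/
noncomputable def conj (Φ : ℝ → ℝ) (b : ℝ) : ℝ := sSup (conjSet Φ b)

/-- The (effective) domain of the conjugate `Φ*`. -/
def domStar (Φ : ℝ → ℝ) : Set ℝ := {b | BddAbove (conjSet Φ b)}

/-- `b` is a subgradient of `Φ : [0,∞) → ℝ` at `a`. -/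
def IsSubgradAt (Φ : ℝ → ℝ) (a b : ℝ) : Prop := ∀ c, 0 ≤ c → Φ a + b * (c - a) ≤ Φ c

/-- Marginal on the first coordinate of a joint distribution `P` on `X × Y`. -/
noncomputable def margX {X Y : Type*} [Fintype Y] (P : X → Y → ℝ) (x : X) : ℝ := ∑ y, P x y

/-- Marginal on the second coordinate. -/
noncomputable def margY {X Y : Type*} [Fintype X] (P : X → Y → ℝ) (y : Y) : ℝ := ∑ x, P x y

/-- Point-wise ratio `P(x,y) / (P_X(x) P_Y(y))`. -/
noncomputable def ratio {X Y : Type*} [Fintype X] [Fintype Y] (P : X → Y → ℝ) (x : X) (y : Y) : ℝ :=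
  P x y / (margX P x * margY P y)

/-- Φ-mutual information `D_Φ(P ‖ P_X ⊗ P_Y)` of a joint distribution on a finite space. -/
noncomputable def phiMI {X Y : Type*} [Fintype X] [Fintype Y] (Φ : ℝ → ℝ) (P : X → Y → ℝ) : ℝ :=
  ∑ x, ∑ y, margX P x * margY P y * Φ (ratio P x y)

/-- Ex-ante truth-telling payment of the Φ-pairing mechanism with scoring function `K`. -/
noncomputable def payoff {X Y : Type*} [Fintype X] [Fintype Y]
    (Φ : ℝ → ℝ) (P : X → Y → ℝ) (K : X → Y → ℝ) : ℝ :=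
  (∑ x, ∑ y, P x y * K x y) - ∑ x, ∑ y, margX P x * margY P y * conj Φ (K x y)

/-- Ex-ante payment to Alice in the Φ-pairing mechanism under strategies `θA, θB`. -/
noncomputable def uA {X Y : Type*} [Fintype X] [Fintype Y]
    (Φ : ℝ → ℝ) (P : X → Y → ℝ) (θA : X → X → ℝ) (θB : Y → Y → ℝ) (K : X → Y → ℝ) : ℝ :=
  (∑ x, ∑ y, P x y * ∑ x', ∑ y', θA x x' * θB y y' * K x' y') -
    ∑ x, ∑ y, margX P x * margY P y * ∑ x', ∑ y', θA x x' * θB y y' * conj Φ (K x' y')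

/-- Stochastic relevance: distinct signals induce distinct posteriors, for both agents. -/
def StochRelevant {X Y : Type*} [Fintype X] [Fintype Y] (P : X → Y → ℝ) : Prop :=
  (∀ x x' : X, x ≠ x' → ∃ y, P x y / margX P x ≠ P x' y / margX P x') ∧
  (∀ y y' : Y, y ≠ y' → ∃ x, P x y / margY P y ≠ P x y' / margY P y')

/-! For every pair of reports `(x̂, ŷ)`, Fenchel–Young `r k - Φ r ≤ Φ* k` at
`r = P(x,y) / (P_X(x) P_Y(y))`, scaled by `P_X(x) P_Y(y)`, bounds the `(x, y)`-term of `u_A` by the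
`(x, y)`-term of `D_Φ(P ‖ P_X ⊗ P_Y)`; the strategies only average these bounds. -/

open Finset

theorem mul_sub_le_conj {Φ : ℝ → ℝ} {a b : ℝ} (ha : 0 ≤ a) (hb : b ∈ domStar Φ) :
    a * b - Φ a ≤ conj Φ b :=
  le_csSup hb ⟨a, ha, rfl⟩

theorem mul_sub_mul_conj_le {Φ : ℝ → ℝ} {p q b : ℝ} (hp : 0 ≤ p) (hq : 0 < q)
    (hb : b ∈ domStar Φ) :
    p * b - q * conj Φ b ≤ q * Φ (p / q) := by
  have key := mul_le_mul_of_nonneg_left (mul_sub_le_conj (div_nonneg hp hq.le) hb) hq.le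
  rwa [mul_sub, ← mul_assoc, mul_div_cancel₀ p hq.ne', sub_le_iff_le_add, ← sub_le_iff_le_add']
    at key

theorem sum_sum_mul_mul_const {ι κ : Type*} [Fintype ι] [Fintype κ] {a : ι → ℝ} {b : κ → ℝ}
    (ha : ∑ i, a i = 1) (hb : ∑ j, b j = 1) (c : ℝ) :
    ∑ i, ∑ j, a i * b j * c = c := by
  simp only [← sum_mul, ← mul_sum, hb, mul_one, ha, one_mul]

theorem uA_eq_sum {X Y : Type*} [Fintype X] [Fintype Y]
    (Φ : ℝ → ℝ) (P : X → Y → ℝ) (θA : X → X → ℝ) (θB : Y → Y → ℝ) (K : X → Y → ℝ) :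
    uA Φ P θA θB K = ∑ x, ∑ y, ∑ x', ∑ y', θA x x' * θB y y' *
      (P x y * K x' y' - margX P x * margY P y * conj Φ (K x' y')) := by
  simp only [uA, mul_sum, ← sum_sub_distrib]
  exact sum_congr rfl fun _ _ => sum_congr rfl fun _ _ => sum_congr rfl fun _ _ =>
    sum_congr rfl fun _ _ => by ring

theorem no_strategy_beats_MI_general {X Y : Type*} [Fintype X] [Fintype Y]
    (Φ : ℝ → ℝ)
    (P : X → Y → ℝ) (hP0 : ∀ x y, 0 ≤ P x y)
    (hPX : ∀ x, 0 < margX P x) (hPY : ∀ y, 0 < margY P y)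
    (θA : X → X → ℝ) (hθA0 : ∀ x x', 0 ≤ θA x x') (hθA1 : ∀ x, ∑ x', θA x x' = 1)
    (θB : Y → Y → ℝ) (hθB0 : ∀ y y', 0 ≤ θB y y') (hθB1 : ∀ y, ∑ y', θB y y' = 1)
    (K : X → Y → ℝ) (hK : ∀ x y, K x y ∈ domStar Φ) :
    uA Φ P θA θB K ≤ phiMI Φ P := by
  rw [uA_eq_sum, phiMI]
  refine sum_le_sum fun x _ => sum_le_sum fun y _ => ?_
  set q := margX P x * margY P y
  calc _ ≤ ∑ x', ∑ y', θA x x' * θB y y' * (q * Φ (ratio P x y)) :=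
        sum_le_sum fun x' _ => sum_le_sum fun y' _ =>
          mul_le_mul_of_nonneg_left
            (mul_sub_mul_conj_le (hP0 x y) (mul_pos (hPX x) (hPY y)) (hK x' y'))
            (mul_nonneg (hθA0 x x') (hθB0 y y'))
    _ = q * Φ (ratio P x y) := sum_sum_mul_mul_const (hθA1 x) (hθB1 y) _

/-- No strategy profile and scoring function can beat the Φ-mutual information. -/
theorem no_strategy_beats_MI {X Y : Type*} [Fintype X] [Fintype Y]
    (Φ : ℝ → ℝ) (hconv : ConvexOn ℝ (Set.Ici 0) Φ)
    (hcont : ContinuousOn Φ (Set.Ici 0)) (hΦ1 : Φ 1 = 0)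
    (P : X → Y → ℝ) (hP0 : ∀ x y, 0 ≤ P x y) (hP1 : ∑ x, ∑ y, P x y = 1)
    (hPX : ∀ x, 0 < margX P x) (hPY : ∀ y, 0 < margY P y)
    (θA : X → X → ℝ) (hθA0 : ∀ x x', 0 ≤ θA x x') (hθA1 : ∀ x, ∑ x', θA x x' = 1)
    (θB : Y → Y → ℝ) (hθB0 : ∀ y y', 0 ≤ θB y y') (hθB1 : ∀ y, ∑ y', θB y y' = 1)
    (K : X → Y → ℝ) (hK : ∀ x y, K x y ∈ domStar Φ) :
    uA Φ P θA θB K ≤ phiMI Φ P :=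
  no_strategy_beats_MI_general Φ P hP0 hPX hPY θA hθA0 hθA1 θB hθB0 hθB1 K hK
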